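/- arXiv:2009.04377 — 10 statements merged into one kernel-verified Lean document; each statement's English description precedes it below -/
import Mathlib

section
/- Let κ be an infinite cardinal and X an infinite set. Let Σ be the signature whose 0-ary symbols are constants c_α for α < κ and with no symbols of arity ≥ 1, so that Fm_Σ(X) = {c_α : α < κ} ∪ X. Define C : ℘(Fm_Σ(X)) → ℘(Fm_Σ(X)) by C(Γ) = Γ ∪ {c_γ : γ is a limit ordinal, 0 < γ < κ, and c_{α+1} ∈ Γ for all α < γ}. Then C is an inflationary, monotone, idempotent, structural operator (so its associated consequence relation Γ ⊢ φ :⟺ φ ∈ C(Γ) is a logic), and this logic has cardinality exactly κ. -/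
universe u

/-- Formulas over the signature whose only symbols are constants `c_α` for `α < κ`
(no symbols of arity ≥ 1), with variables from `X`: `Fm_Σ(X) = {c_α : α < κ} ⊕ X`. -/
def Fm1 (κ : Cardinal.{u}) (X : Type u) : Type (u + 1) :=
  {o : Ordinal.{u} // o < κ.ord} ⊕ X

/-- The substitution (Σ-endomorphism of the formula algebra) induced by `σ : X → Fm`:
it fixes the constants and sends the variable `x` to `σ x`. -/
def subst1 (κ : Cardinal.{u}) (X : Type u) (σ : X → Fm1 κ X) : Fm1 κ X → Fm1 κ X :=
  Sum.elim Sum.inl σ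

/-- The operator `C(Γ) = Γ ∪ {c_γ : γ limit, 0 < γ < κ, and c_{α+1} ∈ Γ for all α < γ}`. -/
def C1 (κ : Cardinal.{u}) (X : Type u) (Γ : Set (Fm1 κ X)) : Set (Fm1 κ X) :=
  Γ ∪ {f | ∃ (γ : Ordinal.{u}) (hγ : γ < κ.ord),
        f = Sum.inl ⟨γ, hγ⟩ ∧ Order.IsSuccLimit γ ∧ 0 < γ ∧
        ∀ α < γ, ∃ h : α + 1 < κ.ord, Sum.inl ⟨α + 1, h⟩ ∈ Γ}

/-- A relation between subsets and elements of `A` is `μ`-ary. -/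
def KAry1 {A : Type (u + 1)} (μ : Cardinal.{u + 1}) (r : Set A → A → Prop) : Prop :=
  ∀ (Γ : Set A) (φ : A), r Γ φ → ∃ Γ' ⊆ Γ, Cardinal.mk ↥Γ' < μ ∧ r Γ' φ

/-!
`C1` only ever adds limit constants, never a successor constant `c_{α+1}`; so applying it twice
adds nothing new. A limit constant `c_γ` follows from exactly its premises `c_{α+1}`, `α < γ`,
of which there are `|γ| < κ`, so the logic is `κ`-ary. For infinite `ν < κ` the constant
`c_{ν.ord}` follows from no proper subset of its `ν` premises, so no `ν` bounds the logic.
-/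

section

variable {κ : Cardinal.{u}} {X : Type u}

def succConsts (κ : Cardinal.{u}) (X : Type u) (γ : Ordinal.{u}) : Set (Fm1 κ X) :=
  {f | ∃ α < γ, ∃ h : α + 1 < κ.ord, f = Sum.inl ⟨α + 1, h⟩}

theorem add_one_lt_of_lt_isSuccLimit {o γ α : Ordinal.{u}} (hγ : γ < o)
    (hl : Order.IsSuccLimit γ) (hα : α < γ) : α + 1 < o := by
  rw [← Order.succ_eq_add_one]
  exact (hl.succ_lt hα).trans hγ

theorem not_isSuccLimit_of_inl_mem_succConsts {γ δ : Ordinal.{u}} {hγ : γ < κ.ord}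
    (h : (Sum.inl ⟨γ, hγ⟩ : Fm1 κ X) ∈ succConsts κ X δ) : ¬ Order.IsSuccLimit γ := by
  obtain ⟨α, -, _, hα⟩ := h
  obtain rfl : γ = α + 1 := congrArg Subtype.val (Sum.inl_injective hα)
  rw [← Order.succ_eq_add_one]
  exact Order.not_isSuccLimit_succ α

theorem mk_succConsts {γ : Ordinal.{u}} (hγ : γ < κ.ord) (hl : Order.IsSuccLimit γ) :
    Cardinal.mk (succConsts κ X γ) = Cardinal.lift.{u + 1} γ.card := by
  let f : Set.Iio γ → Fm1 κ X := fun α =>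
    Sum.inl ⟨α.1 + 1, add_one_lt_of_lt_isSuccLimit hγ hl α.2⟩
  have hf : Function.Injective f := fun α β h => by
    have := congrArg Subtype.val (Sum.inl_injective h)
    simp only [← Order.succ_eq_add_one] at this
    exact Subtype.ext (Order.succ_injective this)
  have hrange : Set.range f = succConsts κ X γ := by
    ext φ
    constructor
    · rintro ⟨α, rfl⟩
      exact ⟨α.1, α.2, _, rfl⟩
    · rintro ⟨α, hα, -, rfl⟩
      exact ⟨⟨α, hα⟩, rfl⟩
  rw [← hrange, Cardinal.mk_range_eq f hf, Cardinal.mk_Iio_ordinal]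

theorem mem_C1_iff {Γ : Set (Fm1 κ X)} {φ : Fm1 κ X} :
    φ ∈ C1 κ X Γ ↔ φ ∈ Γ ∨ ∃ γ, ∃ hγ : γ < κ.ord,
      φ = Sum.inl ⟨γ, hγ⟩ ∧ Order.IsSuccLimit γ ∧ succConsts κ X γ ⊆ Γ := by
  refine or_congr_right <| exists_congr fun γ => exists_congr fun hγ => and_congr_right fun _ => ?_
  constructor
  · rintro ⟨hl, -, hall⟩
    refine ⟨hl, ?_⟩
    rintro _ ⟨α, hα, -, rfl⟩
    exact (hall α hα).2
  · rintro ⟨hl, hsub⟩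
    exact ⟨hl, hl.pos, fun α hα =>
      ⟨add_one_lt_of_lt_isSuccLimit hγ hl hα, hsub ⟨α, hα, _, rfl⟩⟩⟩

theorem inl_mem_C1_succConsts {γ : Ordinal.{u}} (hγ : γ < κ.ord) (hl : Order.IsSuccLimit γ) :
    (Sum.inl ⟨γ, hγ⟩ : Fm1 κ X) ∈ C1 κ X (succConsts κ X γ) :=
  mem_C1_iff.2 <| Or.inr ⟨γ, hγ, rfl, hl, subset_rfl⟩

theorem subset_C1 (Γ : Set (Fm1 κ X)) : Γ ⊆ C1 κ X Γ :=
  Set.subset_union_left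

theorem C1_mono {Γ Δ : Set (Fm1 κ X)} (h : Γ ⊆ Δ) : C1 κ X Γ ⊆ C1 κ X Δ := by
  intro φ hφ
  rcases mem_C1_iff.1 hφ with hφ | ⟨γ, hγ, rfl, hl, hsub⟩
  · exact subset_C1 Δ (h hφ)
  · exact mem_C1_iff.2 <| Or.inr ⟨γ, hγ, rfl, hl, hsub.trans h⟩

theorem succConsts_subset_of_subset_C1 {Γ : Set (Fm1 κ X)} {γ : Ordinal.{u}}
    (h : succConsts κ X γ ⊆ C1 κ X Γ) : succConsts κ X γ ⊆ Γ := by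
  intro φ hφ
  rcases mem_C1_iff.1 (h hφ) with hφ' | ⟨δ, _, rfl, hl, -⟩
  · exact hφ'
  · exact absurd hl (not_isSuccLimit_of_inl_mem_succConsts hφ)

theorem C1_idem (Γ : Set (Fm1 κ X)) : C1 κ X (C1 κ X Γ) = C1 κ X Γ := by
  refine Set.Subset.antisymm ?_ (subset_C1 _)
  intro φ hφ
  rcases mem_C1_iff.1 hφ with hφ | ⟨γ, hγ, rfl, hl, hsub⟩
  · exact hφ
  · exact mem_C1_iff.2 <| Or.inr ⟨γ, hγ, rfl, hl, succConsts_subset_of_subset_C1 hsub⟩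

theorem subst1_mem_C1 (σ : X → Fm1 κ X) {Γ : Set (Fm1 κ X)} {φ : Fm1 κ X}
    (hφ : φ ∈ C1 κ X Γ) : subst1 κ X σ φ ∈ C1 κ X (subst1 κ X σ '' Γ) := by
  rcases mem_C1_iff.1 hφ with hφ | ⟨γ, hγ, rfl, hl, hsub⟩
  · exact subset_C1 _ ⟨φ, hφ, rfl⟩
  · refine mem_C1_iff.2 <| Or.inr ⟨γ, hγ, rfl, hl, ?_⟩
    rintro _ ⟨α, hα, h, rfl⟩
    exact ⟨_, hsub ⟨α, hα, h, rfl⟩, rfl⟩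

theorem kAry1_C1 (hκ : 1 < κ) :
    KAry1 (Cardinal.lift.{u + 1} κ) (fun Γ φ => φ ∈ C1 κ X Γ) := by
  intro Γ φ hφ
  rcases mem_C1_iff.1 hφ with hφ | ⟨γ, hγ, rfl, hl, hsub⟩
  · refine ⟨{φ}, Set.singleton_subset_iff.2 hφ, ?_, subset_C1 _ rfl⟩
    rw [Cardinal.mk_singleton]
    exact Cardinal.one_lt_lift_iff.2 hκ
  · refine ⟨succConsts κ X γ, hsub, ?_, inl_mem_C1_succConsts hγ hl⟩
    rw [mk_succConsts hγ hl, Cardinal.lift_lt]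
    exact Cardinal.lt_ord.1 hγ

theorem lift_le_of_kAry1_C1 {μ : Cardinal.{u + 1}} (hμ : Cardinal.aleph0 ≤ μ)
    (h : KAry1 μ (fun Γ φ => φ ∈ C1 κ X Γ)) : Cardinal.lift.{u + 1} κ ≤ μ := by
  by_contra! hlt
  obtain ⟨ν, rfl⟩ := Cardinal.mem_range_lift_of_le hlt.le
  rw [← Cardinal.lift_aleph0.{u + 1, u}, Cardinal.lift_le] at hμ
  have hl : Order.IsSuccLimit ν.ord := Cardinal.isSuccLimit_ord hμ
  have hγ : ν.ord < κ.ord := Cardinal.ord_lt_ord.2 (Cardinal.lift_lt.1 hlt)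
  obtain ⟨Γ', hΓ', hcard, hmem⟩ := h _ _ (inl_mem_C1_succConsts (X := X) hγ hl)
  have hsub : succConsts κ X ν.ord ⊆ Γ' := by
    rcases mem_C1_iff.1 hmem with hmem | ⟨δ, _, hδeq, -, hδsub⟩
    · exact absurd hl (not_isSuccLimit_of_inl_mem_succConsts (hΓ' hmem))
    · obtain rfl : ν.ord = δ := congrArg Subtype.val (Sum.inl_injective hδeq)
      exact hδsub
  have := Cardinal.mk_le_mk_of_subset hsub
  rw [mk_succConsts hγ hl, Cardinal.card_ord] at this
  exact hcard.not_ge this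

end

theorem stmt_1_general (κ : Cardinal.{u}) (hκ : Cardinal.aleph0 ≤ κ)
    (X : Type u) :
    -- inflationary
    (∀ Γ, Γ ⊆ C1 κ X Γ) ∧
    -- monotone
    (∀ Γ Δ, Γ ⊆ Δ → C1 κ X Γ ⊆ C1 κ X Δ) ∧
    -- idempotent
    (∀ Γ, C1 κ X (C1 κ X Γ) = C1 κ X Γ) ∧
    -- structural
    (∀ (σ : X → Fm1 κ X) (Γ : Set (Fm1 κ X)) (φ : Fm1 κ X),
        φ ∈ C1 κ X Γ → subst1 κ X σ φ ∈ C1 κ X (subst1 κ X σ '' Γ)) ∧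
    -- the associated logic is κ-ary
    KAry1 (Cardinal.lift.{u + 1} κ) (fun Γ φ => φ ∈ C1 κ X Γ) ∧
    -- and κ is the least infinite cardinal for which it is κ-ary: cardinality exactly κ
    (∀ μ : Cardinal.{u + 1}, Cardinal.aleph0 ≤ μ →
        KAry1 μ (fun Γ φ => φ ∈ C1 κ X Γ) → Cardinal.lift.{u + 1} κ ≤ μ) :=
  ⟨subset_C1, fun _ _ => C1_mono, C1_idem, fun σ _ _ => subst1_mem_C1 σ,
    kAry1_C1 (Cardinal.one_lt_aleph0.trans_le hκ), fun _ hμ => lift_le_of_kAry1_C1 hμ⟩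

/-- `C1` is an inflationary, monotone, idempotent, structural operator,
and its associated consequence relation `Γ ⊢ φ :⟺ φ ∈ C1 κ X Γ` is a logic of
cardinality exactly `κ`. -/
theorem stmt_1 (κ : Cardinal.{u}) (hκ : Cardinal.aleph0 ≤ κ)
    (X : Type u) (hX : Infinite X) :
    -- inflationary
    (∀ Γ, Γ ⊆ C1 κ X Γ) ∧
    -- monotone
    (∀ Γ Δ, Γ ⊆ Δ → C1 κ X Γ ⊆ C1 κ X Δ) ∧
    -- idempotent
    (∀ Γ, C1 κ X (C1 κ X Γ) = C1 κ X Γ) ∧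
    -- structural
    (∀ (σ : X → Fm1 κ X) (Γ : Set (Fm1 κ X)) (φ : Fm1 κ X),
        φ ∈ C1 κ X Γ → subst1 κ X σ φ ∈ C1 κ X (subst1 κ X σ '' Γ)) ∧
    -- the associated logic is κ-ary
    KAry1 (Cardinal.lift.{u + 1} κ) (fun Γ φ => φ ∈ C1 κ X Γ) ∧
    -- and κ is the least infinite cardinal for which it is κ-ary: cardinality exactly κ
    (∀ μ : Cardinal.{u + 1}, Cardinal.aleph0 ≤ μ →
        KAry1 μ (fun Γ φ => φ ∈ C1 κ X Γ) → Cardinal.lift.{u + 1} κ ≤ μ) :=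
  stmt_1_general κ hκ X
end

section
/- For every singular cardinal κ there exist a signature Σ, an infinite set X of variables, and a logic ⊢ on Fm_Σ(X) such that the κ-ary part ⊢_κ (defined by Γ ⊢_κ φ iff Γ' ⊢ φ for some Γ' ⊆ Γ with |Γ'| < κ) fails to satisfy cut, and hence is not a consequence relation. Concretely, one may take Σ_0 = (⋃_{i∈I} M_i) ⊔ I ⊔ {∗} for pairwise disjoint sets M_i with |I| < κ, |M_i| < κ, |⋃_i M_i| = κ, Σ_n = ∅ for n ≥ 1, X countable, and ⊢ the consequence relation generated by the rules M_i ⊢ i (for i ∈ I) and I ⊢ ∗: then ⋃_i M_i ⊢_κ-derives each i ∈ I and I ⊢_κ ∗, but not ⋃_i M_i ⊢_κ ∗. -/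
/-!
A singular cardinal `κ` is the size of a disjoint union `⋃ i ∈ I, M i` with `#I < κ` and every
`#(M i) < κ`: take the initial segments of `κ` below the points of a cofinal set of size `cf κ`.
In the logic generated by the rules `M i ⊢ i` and `I ⊢ ∗`, each `i` follows from the small set
`M i` and `∗` from the small set `I`, but a subset of `⋃ i, M i` proves `∗` only if it is all of
`⋃ i, M i`, which has size `κ`.
-/

universe u

/-- The `κ`-ary part of a relation between subsets and elements of `A`. -/
def kAryPart {A : Type u} (κ : Cardinal.{u}) (r : Set A → A → Prop) :
    Set A → A → Prop :=
  fun Γ φ => ∃ Γ' ⊆ Γ, Cardinal.mk ↥Γ' < κ ∧ r Γ' φ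

open Cardinal Set

theorem Cardinal.mk_le_mk_sigma_Iio_of_isCofinal {α : Type u} [LinearOrder α] [NoMaxOrder α]
    {s : Set α} (hs : IsCofinal s) : #α ≤ #(Σ b : s, Iio (b : α)) := by
  refine mk_le_of_surjective (f := fun x => (x.2 : α)) fun a => ?_
  obtain ⟨a', ha'⟩ := exists_gt a
  obtain ⟨b, hb, hab⟩ := hs a'
  exact ⟨⟨⟨b, hb⟩, a, ha'.trans_le hab⟩, rfl⟩

theorem Cardinal.IsSingular.exists_le_mk_sigma {κ : Cardinal.{u}} (hκ : κ.IsSingular) :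
    ∃ (ι : Type u) (M : ι → Type u), #ι < κ ∧ (∀ i, #(M i) < κ) ∧ κ ≤ #(Σ i, M i) := by
  have := Cardinal.noMaxOrder hκ.aleph0_le
  obtain ⟨s, hs, hcard⟩ := Order.exists_cof_eq κ.ord.ToType
  refine ⟨s, fun b => Iio (b : κ.ord.ToType), ?_, fun b => ?_, ?_⟩
  · rw [hcard, Ordinal.cof_toType]
    exact hκ.cof_ord_lt
  · simpa using mk_Iio_lt (b : κ.ord.ToType) (by simp)
  · simpa using mk_le_mk_sigma_Iio_of_isCofinal hs

namespace SingularCut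

variable {ι : Type u} (M : ι → Type u)

inductive Const : Type u
  | elem (i : ι) (m : M i)
  | tag (i : ι)
  | star

variable {M} {X : Type u} {Γ Δ : Set (Const M ⊕ X)} {φ : Const M ⊕ X} {i : ι}

def Covers (Γ : Set (Const M ⊕ X)) (i : ι) : Prop :=
  ∀ m, .inl (.elem i m) ∈ Γ

/-- The consequence relation generated by the rules `M i ⊢ tag i` and `{tag i | i} ⊢ star`,
in closed form. -/
def Derives (Γ : Set (Const M ⊕ X)) (φ : Const M ⊕ X) : Prop :=
  φ ∈ Γ ∨ match φ with
    | .inl (.tag i) => Covers Γ i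
    | .inl .star => ∀ i, .inl (.tag i) ∈ Γ ∨ Covers Γ i
    | _ => False

theorem derives_of_mem (h : φ ∈ Γ) : Derives Γ φ := Or.inl h

@[simp]
theorem derives_elem_iff {m : M i} : Derives Γ (.inl (.elem i m)) ↔ .inl (.elem i m) ∈ Γ := by
  simp [Derives]

theorem Covers.of_derives (hΓ : Covers Γ i) (hΔ : ∀ ψ ∈ Γ, Derives Δ ψ) : Covers Δ i :=
  fun m => derives_elem_iff.1 (hΔ _ (hΓ m))

theorem Derives.trans (hΓ : Derives Γ φ) (hΔ : ∀ ψ ∈ Γ, Derives Δ ψ) : Derives Δ φ := by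
  rcases hΓ with hφ | hφ
  · exact hΔ φ hφ
  rcases φ with ((_ | i | _) | _)
  · exact hφ.elim
  · exact Or.inr (hφ.of_derives hΔ)
  · exact Or.inr fun i => (hφ i).elim (hΔ _) fun hi => Or.inr (hi.of_derives hΔ)
  · exact hφ.elim

theorem Derives.mono (h : Γ ⊆ Δ) (hΓ : Derives Γ φ) : Derives Δ φ :=
  hΓ.trans fun _ hψ => derives_of_mem (h hψ)

theorem Derives.image {f : Const M ⊕ X → Const M ⊕ X} (hf : ∀ c, f (.inl c) = .inl c)
    (hΓ : Derives Γ φ) : Derives (f '' Γ) (f φ) := by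
  have covers_image {i : ι} (hi : Covers Γ i) : Covers (f '' Γ) i :=
    fun m => hf _ ▸ mem_image_of_mem f (hi m)
  have tag_mem_image {i : ι} (hi : .inl (.tag i) ∈ Γ) : .inl (.tag i) ∈ f '' Γ :=
    hf _ ▸ mem_image_of_mem f hi
  rcases hΓ with hφ | hφ
  · exact derives_of_mem (mem_image_of_mem f hφ)
  rcases φ with ((_ | i | _) | _)
  · exact hφ.elim
  · rw [hf]
    exact Or.inr (covers_image hφ)
  · rw [hf]
    exact Or.inr fun i => (hφ i).imp tag_mem_image covers_image
  · exact hφ.elim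

theorem derives_star_range_tag :
    Derives (range fun i => .inl (.tag i)) (.inl .star : Const M ⊕ X) :=
  Or.inr fun i => Or.inl ⟨i, rfl⟩

theorem derives_tag_range_elem (i : ι) :
    Derives (range fun m : M i => .inl (.elem i m)) (.inl (.tag i) : Const M ⊕ X) :=
  Or.inr fun m => ⟨m, rfl⟩

def elems : (Σ i, M i) → Const M ⊕ X := fun x => .inl (.elem x.1 x.2)

theorem elems_injective : Function.Injective (elems : (Σ i, M i) → Const M ⊕ X) := by
  rintro ⟨i, m⟩ ⟨j, n⟩ h
  simp only [elems, Sum.inl.injEq, Const.elem.injEq] at h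
  obtain ⟨rfl, h⟩ := h
  rw [eq_of_heq h]

theorem range_elems_subset_of_derives_star (hΓ : Γ ⊆ range elems) (h : Derives Γ (.inl .star)) :
    range elems ⊆ Γ := by
  have not_mem {c : Const M} (hc : ∀ x : Σ i, M i, c ≠ .elem x.1 x.2) : .inl c ∉ Γ := fun hmem => by
    obtain ⟨x, hx⟩ := hΓ hmem
    exact hc x (Sum.inl.inj hx).symm
  rcases h with hstar | hcovers
  · exact absurd hstar (not_mem fun _ => nofun)
  rintro _ ⟨⟨i, m⟩, rfl⟩
  exact ((hcovers i).resolve_left (not_mem fun _ => nofun)) m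

end SingularCut

open SingularCut

/-- for every singular cardinal κ there exist a signature Σ (here: a
signature having only constant symbols, collected in the type `Consts`, so that
`Fm_Σ(X) = Consts ⊕ X` and the substitutions are the maps `Sum.elim Sum.inl σ` for
`σ : X → Consts ⊕ X`), a countably infinite set `X` of variables, and a logic `r`
on `Fm_Σ(X)` (reflexive, monotone, satisfying cut, structural) such that the κ-ary
part of `r` fails to satisfy cut, hence is not a consequence relation. -/
theorem stmt_2 (κ : Cardinal.{u}) (hinf : Cardinal.aleph0 ≤ κ)
    (hsing : ¬κ.IsRegular) :
    ∃ (Consts : Type u) (X : Type u), Countable X ∧ Infinite X ∧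
      ∃ r : Set (Consts ⊕ X) → (Consts ⊕ X) → Prop,
        -- r is a logic:
        (∀ (Γ : Set (Consts ⊕ X)) (φ : Consts ⊕ X), φ ∈ Γ → r Γ φ) ∧
        (∀ (Γ Δ : Set (Consts ⊕ X)) (φ : Consts ⊕ X), Γ ⊆ Δ → r Γ φ → r Δ φ) ∧
        (∀ (Γ Δ : Set (Consts ⊕ X)) (φ : Consts ⊕ X),
            r Γ φ → (∀ ψ ∈ Γ, r Δ ψ) → r Δ φ) ∧
        (∀ (σ : X → Consts ⊕ X) (Γ : Set (Consts ⊕ X)) (φ : Consts ⊕ X),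
            r Γ φ → r (Sum.elim Sum.inl σ '' Γ) (Sum.elim Sum.inl σ φ)) ∧
        -- but its κ-ary part fails to satisfy cut:
        ∃ (Γ Δ : Set (Consts ⊕ X)) (φ : Consts ⊕ X),
          kAryPart κ r Γ φ ∧ (∀ ψ ∈ Γ, kAryPart κ r Δ ψ) ∧ ¬ kAryPart κ r Δ φ := by
  obtain ⟨ι, M, hι, hM, hκ⟩ := (IsSingular.of_not_isRegular hinf hsing).exists_le_mk_sigma
  refine ⟨Const M, ULift ℕ, inferInstance, inferInstance, Derives,
    fun _ _ => derives_of_mem, fun _ _ _ => Derives.mono, fun _ _ _ => Derives.trans,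
    fun _ _ _ => Derives.image fun _ => rfl,
    range fun i => .inl (.tag i), range elems, .inl .star,
    ⟨_, subset_rfl, mk_range_le.trans_lt hι, derives_star_range_tag⟩, ?_, ?_⟩
  · rintro _ ⟨i, rfl⟩
    exact ⟨_, range_subset_iff.2 fun m => ⟨⟨i, m⟩, rfl⟩, mk_range_le.trans_lt (hM i),
      derives_tag_range_elem i⟩
  · rintro ⟨Γ, hΓ, hcard, hstar⟩
    have hsize : #(Σ i, M i) ≤ #Γ := by
      rw [← mk_range_eq _ elems_injective]
      exact mk_le_mk_of_subset (range_elems_subset_of_derives_star hΓ hstar)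
    exact (hcard.trans_le (hκ.trans hsize)).false
end

section
/- Let κ be a regular cardinal, Σ a signature, X an infinite set, G a complete lattice, and i : G → ℘(Fm_Σ(X)) an order-preserving map that preserves arbitrary infima and preserves suprema of κ-directed subsets of G, and which is natural with respect to substitutions in the following sense: for every substitution σ (Σ-endomorphism of Fm_Σ(X)) and every g ∈ G there exists g' ∈ G with i(g') = σ⁻¹(i(g)). Then the operator C on ℘(Fm_Σ(X)) defined by C(Γ) := ⋂ {i(g) : g ∈ G, Γ ⊆ i(g)} is a κ-ary structural closure operator; that is, the relation Γ ⊢ φ :⟺ φ ∈ C(Γ) is a logic of cardinality at most κ. -/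
universe u v w

open FirstOrder FirstOrder.Language

/-- A relation between subsets and elements of `A` is `μ`-ary. -/
def KAry {A : Type*} (μ : Cardinal) (r : Set A → A → Prop) : Prop :=
  ∀ (Γ : Set A) (φ : A), r Γ φ → ∃ Γ' ⊆ Γ, Cardinal.mk ↥Γ' < μ ∧ r Γ' φ

/-- The closure operator `C(Γ) = ⋂ {i(g) : g ∈ G, Γ ⊆ i(g)}` determined by an
order-preserving map `i : G → ℘(Fm_Σ(X))`. -/
def cl4 {L : FirstOrder.Language} {X : Type*} {G : Type*} (i : G → Set (L.Term X))
    (Γ : Set (L.Term X)) : Set (L.Term X) :=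
  ⋂ g ∈ {g : G | Γ ⊆ i g}, i g

/-- if `G` is a complete lattice and `i : G → ℘(Fm_Σ(X))` is order
preserving, preserves arbitrary infima and κ-directed suprema, and is natural with
respect to substitutions, then `C(Γ) = ⋂ {i(g) : Γ ⊆ i(g)}` is a κ-ary structural
closure operator; i.e. `Γ ⊢ φ :⟺ φ ∈ C(Γ)` is a logic of cardinality at most κ. -/
theorem stmt_4 {L : FirstOrder.Language.{u, v}} {X : Type w} [Infinite X]
    (κ : Cardinal.{max u w}) (hκ : κ.IsRegular)
    {G : Type max u w} [CompleteLattice G]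
    (i : G → Set (L.Term X)) (himono : Monotone i)
    (hinf : ∀ S : Set G, i (sInf S) = ⋂ g ∈ S, i g)
    (hsup : ∀ D : Set G,
        (∀ S ⊆ D, Cardinal.mk ↥S < κ → ∃ b ∈ D, ∀ s ∈ S, s ≤ b) →
        i (sSup D) = ⋃ g ∈ D, i g)
    (hnat : ∀ (σ : X → L.Term X) (g : G), ∃ g' : G,
        i g' = (fun t : L.Term X => t.subst σ) ⁻¹' i g) :
    -- C is inflationary
    (∀ Γ, Γ ⊆ cl4 i Γ) ∧
    -- C is monotone
    (∀ Γ Δ, Γ ⊆ Δ → cl4 i Γ ⊆ cl4 i Δ) ∧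
    -- C is idempotent
    (∀ Γ, cl4 i (cl4 i Γ) = cl4 i Γ) ∧
    -- C is structural
    (∀ (σ : X → L.Term X) (Γ : Set (L.Term X)) (φ : L.Term X),
        φ ∈ cl4 i Γ → φ.subst σ ∈ cl4 i ((fun t : L.Term X => t.subst σ) '' Γ)) ∧
    -- the associated consequence relation is κ-ary (a logic of cardinality at most κ)
    KAry κ (fun Γ φ => φ ∈ cl4 i Γ) := by

  classical
  -- basic facts about cl4
  have mem_cl : ∀ (Γ : Set (L.Term X)) (φ : L.Term X),
      φ ∈ cl4 i Γ ↔ ∀ g : G, Γ ⊆ i g → φ ∈ i g := by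
    intro Γ φ; simp [cl4]
  have infl : ∀ Γ, Γ ⊆ cl4 i Γ := by
    intro Γ φ hφ
    exact (mem_cl Γ φ).2 (fun g hg => hg hφ)
  have mono : ∀ Γ Δ, Γ ⊆ Δ → cl4 i Γ ⊆ cl4 i Δ := by
    intro Γ Δ hΓΔ φ hφ
    exact (mem_cl Δ φ).2 (fun g hg => (mem_cl Γ φ).1 hφ g (hΓΔ.trans hg))
  set c : Set (L.Term X) → G := fun Γ => sInf {g : G | Γ ⊆ i g} with hc
  have key : ∀ Γ, cl4 i Γ = i (c Γ) := by
    intro Γ; rw [hc, hinf]; rfl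
  have cmono : ∀ Γ Δ : Set (L.Term X), Γ ⊆ Δ → c Γ ≤ c Δ := by
    intro Γ Δ h
    exact sInf_le_sInf (fun g hg => h.trans hg)
  have subcl : ∀ Γ, Γ ⊆ i (c Γ) := by
    intro Γ; rw [← key]; exact infl Γ
  have idem : ∀ Γ, cl4 i (cl4 i Γ) = cl4 i Γ := by
    intro Γ
    refine le_antisymm ?_ (infl _)
    intro φ hφ
    rw [key Γ]
    exact (mem_cl _ φ).1 hφ (c Γ) (by rw [key Γ])
  refine ⟨infl, mono, idem, ?_, ?_⟩
  · -- structural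
    intro σ Γ φ hφ
    rw [mem_cl]
    intro g hg
    obtain ⟨g', hg'⟩ := hnat σ g
    have hΓg' : Γ ⊆ i g' := by
      rw [hg']
      intro ψ hψ
      exact hg ⟨ψ, hψ, rfl⟩
    have := (mem_cl Γ φ).1 hφ g' hΓg'
    rw [hg'] at this
    exact this
  · -- κ-ary
    intro Γ φ hφ
    set D : Set G := {g : G | ∃ Γ' : Set (L.Term X), Γ' ⊆ Γ ∧ Cardinal.mk ↥Γ' < κ ∧ g = c Γ'}
      with hD
    have hdir : ∀ S ⊆ D, Cardinal.mk ↥S < κ → ∃ b ∈ D, ∀ s ∈ S, s ≤ b := by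
      intro S hSD hScard
      have hw : ∀ s : S, ∃ Γ' : Set (L.Term X),
          Γ' ⊆ Γ ∧ Cardinal.mk ↥Γ' < κ ∧ (s : G) = c Γ' := fun s => hSD s.2
      choose f hf1 hf2 hf3 using hw
      set U : Set (L.Term X) := ⋃ s : S, f s with hU
      have hUΓ : U ⊆ Γ := Set.iUnion_subset (fun s => hf1 s)
      have hUcard : Cardinal.mk ↥U < κ := by
        apply lt_of_le_of_lt (Cardinal.mk_iUnion_le f)
        apply Cardinal.mul_lt_of_lt hκ.aleph0_le hScard
        exact Cardinal.iSup_lt_of_isRegular hκ hScard hf2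
      refine ⟨c U, ⟨U, hUΓ, hUcard, rfl⟩, ?_⟩
      intro s hs
      have : s = c (f ⟨s, hs⟩) := hf3 ⟨s, hs⟩
      rw [this]
      exact cmono _ _ (Set.subset_iUnion f ⟨s, hs⟩)
    have hΓsup : Γ ⊆ i (sSup D) := by
      intro ψ hψ
      have h1 : ({ψ} : Set (L.Term X)) ⊆ Γ := Set.singleton_subset_iff.2 hψ
      have h2 : Cardinal.mk ↥({ψ} : Set (L.Term X)) < κ := by
        rw [Cardinal.mk_singleton]
        exact lt_of_lt_of_le Cardinal.one_lt_aleph0 hκ.aleph0_le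
      have hmem : c ({ψ} : Set (L.Term X)) ∈ D := ⟨{ψ}, h1, h2, rfl⟩
      exact himono (le_sSup hmem) (subcl {ψ} rfl)
    have hφ2 : φ ∈ i (sSup D) := (mem_cl Γ φ).1 hφ _ hΓsup
    rw [hsup D hdir] at hφ2
    simp only [Set.mem_iUnion] at hφ2
    obtain ⟨g, hgD, hφg⟩ := hφ2
    obtain ⟨Γ', hΓ'Γ, hΓ'card, rfl⟩ := hgD
    exact ⟨Γ', hΓ'Γ, hΓ'card, by show φ ∈ cl4 i Γ'; rw [key Γ']; exact hφg⟩
end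

section
/- Let X ⊆ Y be infinite sets and l = (Fm_Σ(X), ⊢) a logic, with Fm_Σ(X) regarded as a subalgebra of Fm_Σ(Y). Then the Shoesmith–Smiley relation ⊢^SS on Fm_Σ(Y) is the structural closure of the Łoś–Suszko relation ⊢^ŁS on Fm_Σ(Y): that is, ⊢^SS equals the intersection of all relations R between subsets and elements of Fm_Σ(Y) that are reflexive, monotone, structural (with respect to all Σ-endomorphisms of Fm_Σ(Y)) and contain ⊢^ŁS. -/
open FirstOrder FirstOrder.Language

/-- `r` is a logic on `Fm_Σ(X)`: reflexive, monotone, satisfying cut, structural. -/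
def IsLogicOn {L : FirstOrder.Language} {W : Type*}
    (r : Set (L.Term W) → L.Term W → Prop) : Prop :=
  (∀ (Γ : Set (L.Term W)) (φ : L.Term W), φ ∈ Γ → r Γ φ) ∧
  (∀ (Γ Δ : Set (L.Term W)) (φ : L.Term W), Γ ⊆ Δ → r Γ φ → r Δ φ) ∧
  (∀ (Γ Δ : Set (L.Term W)) (φ : L.Term W), r Γ φ → (∀ ψ ∈ Γ, r Δ ψ) → r Δ φ) ∧
  (∀ (σ : W → L.Term W) (Γ : Set (L.Term W)) (φ : L.Term W),
      r Γ φ → r ((fun t : L.Term W => t.subst σ) '' Γ) (φ.subst σ))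

/-- The Łoś–Suszko relation on `Fm_Σ(Y)` (where `Fm_Σ(X)` is regarded inside
`Fm_Σ(Y)` via `Term.relabel em`): `Γ ⊢^ŁS φ` iff there exist a Σ-automorphism `v`
of `Fm_Σ(Y)` (a substitution with a substitution inverse) and `Γ' ⊆ Γ` such that
`v[Γ' ∪ {φ}] ⊆ Fm_Σ(X)` and `v[Γ'] ⊢ v(φ)` holds in the logic `r` on `Fm_Σ(X)`. -/
def LosSuszko {L : FirstOrder.Language} {X Y : Type*} (em : X → Y)
    (r : Set (L.Term X) → L.Term X → Prop)
    (Γ : Set (L.Term Y)) (φ : L.Term Y) : Prop :=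
  ∃ σ τ : Y → L.Term Y,
    (∀ t : L.Term Y, (t.subst σ).subst τ = t) ∧
    (∀ t : L.Term Y, (t.subst τ).subst σ = t) ∧
    ∃ Γ' ⊆ Γ, ∃ (Γ₀ : Set (L.Term X)) (φ₀ : L.Term X),
      (fun t : L.Term Y => t.subst σ) '' Γ' = Term.relabel em '' Γ₀ ∧
      φ.subst σ = Term.relabel em φ₀ ∧ r Γ₀ φ₀

/-- The Shoesmith–Smiley relation on `Fm_Σ(Y)`: `Γ ⊢^SS φ` iff there exist
`Γ' ∪ {φ'} ⊆ Fm_Σ(X)` and a Σ-homomorphism `v : Fm_Σ(X) → Fm_Σ(Y)` with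
`v[Γ'] ⊆ Γ`, `v(φ') = φ` and `Γ' ⊢ φ'`. -/
def ShoesmithSmiley {L : FirstOrder.Language} {X Y : Type*}
    (r : Set (L.Term X) → L.Term X → Prop)
    (Γ : Set (L.Term Y)) (φ : L.Term Y) : Prop :=
  ∃ (Γ₀ : Set (L.Term X)) (φ₀ : L.Term X) (v : X → L.Term Y),
    (fun t : L.Term X => t.subst v) '' Γ₀ ⊆ Γ ∧ φ₀.subst v = φ ∧ r Γ₀ φ₀


private lemma my_subst_var {L : FirstOrder.Language} {α : Type*} (t : L.Term α) :
    t.subst Term.var = t := by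
  induction t with
  | var => rfl
  | func _ _ ih => simp [Term.subst, ih]

private lemma my_subst_subst {L : FirstOrder.Language} {α β γ : Type*}
    (t : L.Term α) (σ : α → L.Term β) (τ : β → L.Term γ) :
    (t.subst σ).subst τ = t.subst (fun a => (σ a).subst τ) := by
  induction t with
  | var => rfl
  | func _ _ ih => simp [Term.subst, ih]

private lemma my_relabel_subst {L : FirstOrder.Language} {α β γ : Type*}
    (f : α → β) (g : β → L.Term γ) (t : L.Term α) :
    (t.relabel f).subst g = t.subst (g ∘ f) := by
  induction t with
  | var => rfl
  | func _ _ ih => simp [Term.subst, Term.relabel, ih]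

/-- `⊢^SS` is the structural closure of `⊢^ŁS`: it equals the
intersection of all reflexive, monotone, structural relations on `Fm_Σ(Y)`
containing `⊢^ŁS`. -/
theorem stmt_9 {L : FirstOrder.Language} {X Y : Type*} [Infinite X] [Infinite Y]
    (em : X → Y) (hem : Function.Injective em)
    (r : Set (L.Term X) → L.Term X → Prop) (hlogic : IsLogicOn r) :
    ∀ (Γ : Set (L.Term Y)) (φ : L.Term Y),
      ShoesmithSmiley r Γ φ ↔
        ∀ R : Set (L.Term Y) → L.Term Y → Prop,
          (∀ (Δ : Set (L.Term Y)) (ψ : L.Term Y), ψ ∈ Δ → R Δ ψ) →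
          (∀ (Δ Δ' : Set (L.Term Y)) (ψ : L.Term Y), Δ ⊆ Δ' → R Δ ψ → R Δ' ψ) →
          (∀ (σ : Y → L.Term Y) (Δ : Set (L.Term Y)) (ψ : L.Term Y),
              R Δ ψ → R ((fun t : L.Term Y => t.subst σ) '' Δ) (ψ.subst σ)) →
          (∀ (Δ : Set (L.Term Y)) (ψ : L.Term Y), LosSuszko em r Δ ψ → R Δ ψ) →
          R Γ φ := by
  obtain ⟨hrefl, hmono, hcut, hstruct⟩ := hlogic
  intro Γ φ
  constructor
  · rintro ⟨Γ₀, φ₀, v, himg, hφ, hr⟩ R hR1 hR2 hR3 hR4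
    -- The relabeled sequent is a Łoś–Suszko consequence
    have hLS : LosSuszko em r (Term.relabel em '' Γ₀) (Term.relabel em φ₀) := by
      refine ⟨Term.var, Term.var, ?_, ?_, Term.relabel em '' Γ₀, subset_rfl, Γ₀, φ₀, ?_, ?_, hr⟩
      · intro t; simp [my_subst_var]
      · intro t; simp [my_subst_var]
      · ext t; simp [my_subst_var]
      · simp [my_subst_var]
    have hbase := hR4 _ _ hLS
    -- extend v along em
    classical
    set σ' : Y → L.Term Y := fun y =>
      if h : ∃ x, em x = y then v h.choose else Term.var y with hσ'
    have hσem : ∀ x : X, σ' (em x) = v x := by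
      intro x
      have h : ∃ x', em x' = em x := ⟨x, rfl⟩
      have := h.choose_spec
      simp only [hσ', dif_pos h]
      rw [hem this]
    have hsub : ∀ t : L.Term X, (Term.relabel em t).subst σ' = t.subst v := by
      intro t
      rw [my_relabel_subst]
      congr 1
      funext x
      exact hσem x
    have hstep := hR3 σ' _ _ hbase
    have himEq : (fun t : L.Term Y => t.subst σ') '' (Term.relabel em '' Γ₀)
        = (fun t : L.Term X => t.subst v) '' Γ₀ := by
      rw [Set.image_image]
      exact Set.image_congr fun t _ => hsub t
    rw [himEq, hsub] at hstep
    rw [hφ] at hstep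
    exact hR2 _ _ _ himg hstep
  · intro h
    refine h (ShoesmithSmiley r) ?_ ?_ ?_ ?_
    · -- reflexive
      intro Δ ψ hψ
      obtain ⟨x₀⟩ : Nonempty X := inferInstance
      exact ⟨{Term.var x₀}, Term.var x₀, fun _ => ψ,
        by simp [Set.image_singleton, Set.singleton_subset_iff, Term.subst, hψ],
        rfl, hrefl _ _ rfl⟩
    · -- monotone
      rintro Δ Δ' ψ hsub ⟨Γ₀, φ₀, v, h1, h2, h3⟩
      exact ⟨Γ₀, φ₀, v, h1.trans hsub, h2, h3⟩
    · -- structural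
      rintro σ Δ ψ ⟨Γ₀, φ₀, v, h1, h2, h3⟩
      refine ⟨Γ₀, φ₀, fun x => (v x).subst σ, ?_, ?_, h3⟩
      · intro t ht
        obtain ⟨s, hs, rfl⟩ := ht
        exact ⟨s.subst v, h1 ⟨s, hs, rfl⟩, my_subst_subst s v σ⟩
      · rw [← h2, my_subst_subst]
    · -- contains Łoś–Suszko
      rintro Δ ψ ⟨σ, τ, hστ, hτσ, Γ', hΓ'Δ, Γ₀, φ₀, him, hφ, hr⟩
      refine ⟨Γ₀, φ₀, fun x => τ (em x), ?_, ?_, hr⟩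
      · intro t ht
        obtain ⟨s, hs, rfl⟩ := ht
        have hmem : Term.relabel em s ∈ (fun t : L.Term Y => t.subst σ) '' Γ' :=
          him ▸ Set.mem_image_of_mem _ hs
        obtain ⟨u, hu, husub⟩ := hmem
        have h2 : u = s.subst (fun x => τ (em x)) := by
          have h3 := congrArg (fun t : L.Term Y => t.subst τ) husub
          simp only at h3
          rw [hστ u] at h3
          rw [h3, my_relabel_subst]
          rfl
        show s.subst (fun x => τ (em x)) ∈ Δ
        exact h2 ▸ hΓ'Δ hu
      · have h3 := congrArg (fun t : L.Term Y => t.subst τ) hφ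
        rw [hστ ψ] at h3
        rw [h3, my_relabel_subst]
        rfl
end

section
/- Let X ⊆ Y be infinite sets, let σ : Fm_Σ(X) → Fm_Σ(Y) be the Σ-homomorphism induced by the inclusion X ⊆ Y, and let τ : Fm_Σ(Y) → Fm_Σ(X) be a Σ-homomorphism induced by a map Y → Fm_Σ(X) that fixes X pointwise (so τ ∘ σ = id). Let 𝒞_X ⊆ ℘(Fm_Σ(X)) and 𝒞_Y ⊆ ℘(Fm_Σ(Y)) be families closed under arbitrary intersections (with empty intersection the full set) such that σ⁻¹(C) ∈ 𝒞_X for every C ∈ 𝒞_Y and τ⁻¹(D) ∈ 𝒞_Y for every D ∈ 𝒞_X. Then for all Γ ∪ {φ} ⊆ Fm_Σ(X): φ belongs to every member of 𝒞_X containing Γ if and only if σ(φ) belongs to every member of 𝒞_Y containing σ[Γ]. In other words, the inclusion Fm_Σ(X) → Fm_Σ(Y) is a conservative translation between the consequence relations determined by 𝒞_X and 𝒞_Y. -/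
open FirstOrder FirstOrder.Language

lemma retract_aux {L : FirstOrder.Language} {X Y : Type*} (em : X → Y)
    (u : Y → L.Term X) (hu : ∀ x : X, u (em x) = Language.Term.var x)
    (t : L.Term X) : (Term.relabel em t).subst u = t := by
  induction t with
  | var x => simp [hu]
  | func f ts ih => simp [Term.relabel, Term.subst, ih]

/-- let `σ : Fm_Σ(X) → Fm_Σ(Y)` be induced by the inclusion `em : X → Y`
(i.e. `Term.relabel em`) and `τ : Fm_Σ(Y) → Fm_Σ(X)` be induced by a map
`u : Y → Fm_Σ(X)` that fixes `X` pointwise (so `τ ∘ σ = id`). If `𝒞_X` and `𝒞_Y` are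
families of subsets closed under arbitrary intersections, stable under `σ`-preimages
resp. `τ`-preimages, then for all `Γ ∪ {φ} ⊆ Fm_Σ(X)`: `φ` belongs to every member of
`𝒞_X` containing `Γ` iff `σ(φ)` belongs to every member of `𝒞_Y` containing `σ[Γ]`;
i.e. the inclusion is a conservative translation between the induced consequence
relations. -/
theorem stmt_10 {L : FirstOrder.Language} {X Y : Type*} [Infinite X] [Infinite Y]
    (em : X → Y) (hem : Function.Injective em)
    (u : Y → L.Term X) (hu : ∀ x : X, u (em x) = Language.Term.var x)
    (CX : Set (Set (L.Term X))) (CY : Set (Set (L.Term Y)))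
    (hCX : ∀ S ⊆ CX, ⋂₀ S ∈ CX) (hCY : ∀ S ⊆ CY, ⋂₀ S ∈ CY)
    (hσ : ∀ C ∈ CY, Term.relabel em ⁻¹' C ∈ CX)
    (hτ : ∀ D ∈ CX, (fun t : L.Term Y => t.subst u) ⁻¹' D ∈ CY) :
    ∀ (Γ : Set (L.Term X)) (φ : L.Term X),
      (∀ C ∈ CX, Γ ⊆ C → φ ∈ C) ↔
      (∀ C ∈ CY, Term.relabel em '' Γ ⊆ C → Term.relabel em φ ∈ C) := by
  intro Γ φ
  constructor
  · intro h C hC hΓ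
    exact h _ (hσ C hC) (fun γ hγ => hΓ ⟨γ, hγ, rfl⟩)
  · intro h D hD hΓ
    have := h _ (hτ D hD) (by
      rintro _ ⟨γ, hγ, rfl⟩
      show (Term.relabel em γ).subst u ∈ D
      rw [retract_aux em u hu]; exact hΓ hγ)
    simpa [retract_aux em u hu] using this
end

section
/- Let κ be a singular cardinal, X ⊆ Y infinite sets, and l = (Fm_Σ(X), ⊢) a logic of cardinality κ. Then there exists a logic ⊢' on Fm_Σ(Y) of cardinality at most κ⁺ (the successor cardinal) that is a conservative extension of l: for all Γ ∪ {φ} ⊆ Fm_Σ(X) (regarded inside Fm_Σ(Y)) one has Γ ⊢ φ if and only if Γ ⊢' φ. -/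
universe u v w

open FirstOrder FirstOrder.Language

/-!
The extension is the least logic on `Fm_Σ(Y)` containing the translated rules `em[Γ] ⊢ em(φ)`.
It is conservative because every substitution `τ : Y → Fm_Σ(X)` maps its derivations back to
derivations of `⊢`: each closure rule is preserved, the structurality rule because substitutions
compose. Taking `τ` to invert `em` recovers `Γ ⊢ φ`. It is `κ⁺`-ary because each rule, applied to
premises with derivations from at most `κ` hypotheses, yields one from at most `κ · κ = κ`.
-/

namespace FirstOrder.Language.Term

variable {L : Language} {α β γ : Type*}

theorem subst_var (t : L.Term α) : t.subst var = t := by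
  induction t with
  | var => rfl
  | func f ts ih => simp only [subst, ih]

theorem subst_subst (t : L.Term α) (σ : α → L.Term β) (τ : β → L.Term γ) :
    (t.subst σ).subst τ = t.subst fun a => (σ a).subst τ := by
  induction t with
  | var => rfl
  | func f ts ih => simp only [subst, ih]

theorem relabel_subst (t : L.Term α) (f : α → β) (τ : β → L.Term γ) :
    (t.relabel f).subst τ = t.subst (τ ∘ f) := by
  induction t with
  | var => rfl
  | func f ts ih => simp only [relabel, subst, ih]

end FirstOrder.Language.Term

open Cardinal in
theorem Cardinal.mk_iUnion_le_of_le {α ι : Type u} {κ : Cardinal.{u}} (hκ : aleph0 ≤ κ)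
    (s : ι → Set α) (hι : #ι ≤ κ) (hs : ∀ i, #(s i) ≤ κ) : #(⋃ i, s i) ≤ κ :=
  calc #(⋃ i, s i) ≤ #ι * ⨆ i, #(s i) := mk_iUnion_le s
    _ ≤ κ * κ := mul_le_mul' hι (ciSup_le' hs)
    _ = κ := mul_eq_self hκ

section RelabelClosure

variable {L : FirstOrder.Language.{u, v}} {X Y : Type w}

inductive RelabelClosure (em : X → Y) (r : Set (L.Term X) → L.Term X → Prop) :
    Set (L.Term Y) → L.Term Y → Prop
  | rel {Γ φ} : φ ∈ Γ → RelabelClosure em r Γ φ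
  | relabel {Γ φ} : r Γ φ → RelabelClosure em r (Term.relabel em '' Γ) (Term.relabel em φ)
  | mono {Γ Δ φ} : Γ ⊆ Δ → RelabelClosure em r Γ φ → RelabelClosure em r Δ φ
  | cut {Γ Δ φ} : RelabelClosure em r Γ φ → (∀ ψ ∈ Γ, RelabelClosure em r Δ ψ) →
      RelabelClosure em r Δ φ
  | subst (σ : Y → L.Term Y) {Γ φ} : RelabelClosure em r Γ φ →
      RelabelClosure em r ((fun t : L.Term Y => t.subst σ) '' Γ) (φ.subst σ)

namespace RelabelClosure

variable {em : X → Y} {r : Set (L.Term X) → L.Term X → Prop}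

theorem isLogicOn : IsLogicOn (RelabelClosure em r) :=
  ⟨fun _ _ => rel, fun _ _ _ => mono, fun _ _ _ => cut, fun σ _ _ => subst σ⟩

theorem subst_image (hr : IsLogicOn r) {Γ : Set (L.Term Y)} {φ : L.Term Y}
    (h : RelabelClosure em r Γ φ) (τ : Y → L.Term X) :
    r ((fun t : L.Term Y => t.subst τ) '' Γ) (φ.subst τ) := by
  obtain ⟨hrefl, hmono, hcut, hsubst⟩ := hr
  induction h generalizing τ with
  | rel hφ => exact hrefl _ _ ⟨_, hφ, rfl⟩
  | @relabel Γ φ h =>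
      rw [Set.image_image, Term.relabel_subst]
      simpa only [Term.relabel_subst] using hsubst (τ ∘ em) Γ φ h
  | mono hsub _ ih => exact hmono _ _ _ (Set.image_mono hsub) (ih τ)
  | cut _ _ ih ihs =>
      refine hcut _ _ _ (ih τ) ?_
      rintro _ ⟨ψ, hψ, rfl⟩
      exact ihs ψ hψ τ
  | subst σ _ ih =>
      rw [Set.image_image, Term.subst_subst]
      simpa only [Term.subst_subst] using ih fun y => (σ y).subst τ

theorem relabel_iff (hr : IsLogicOn r) (hem : Function.Injective em)
    (Γ : Set (L.Term X)) (φ : L.Term X) :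
    RelabelClosure em r (Term.relabel em '' Γ) (Term.relabel em φ) ↔ r Γ φ := by
  refine ⟨fun h => ?_, relabel⟩
  -- Off the range of `em` the substitution is arbitrary; `φ` merely inhabits `L.Term X`.
  have hτ : Function.extend em Term.var (fun _ => φ) ∘ em = Term.var :=
    funext (hem.extend_apply _ _)
  simpa only [Set.image_image, Term.relabel_subst, hτ, Term.subst_var, Set.image_id']
    using subst_image hr h (Function.extend em Term.var fun _ => φ)

theorem kAry_succ {κ : Cardinal.{max u w}} (hκ : Cardinal.aleph0 ≤ κ) (hr : KAry κ r) :
    KAry (Order.succ κ) (RelabelClosure em r) := by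
  intro Γ φ h
  simp only [Order.lt_succ_iff]
  induction h with
  | @rel Γ φ hφ =>
      exact ⟨{φ}, Set.singleton_subset_iff.2 hφ,
        by simpa using Cardinal.one_le_aleph0.trans hκ, rel rfl⟩
  | relabel h =>
      obtain ⟨Γ', hsub, hcard, h'⟩ := hr _ _ h
      exact ⟨_, Set.image_mono hsub, Cardinal.mk_image_le.trans hcard.le, relabel h'⟩
  | mono hsub _ ih =>
      obtain ⟨Γ', hΓ', hcard, h'⟩ := ih
      exact ⟨Γ', hΓ'.trans hsub, hcard, h'⟩
  | @cut Γ Δ φ _ _ ih ihs =>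
      obtain ⟨Γ', hΓ', hcard, h'⟩ := ih
      choose Δ' hΔ' hcardΔ' hΔ'φ using fun ψ : Γ' => ihs ψ (hΓ' ψ.2)
      exact ⟨⋃ ψ, Δ' ψ, Set.iUnion_subset hΔ',
        Cardinal.mk_iUnion_le_of_le hκ Δ' hcard hcardΔ',
        cut h' fun ψ hψ => mono (Set.subset_iUnion Δ' ⟨ψ, hψ⟩) (hΔ'φ ⟨ψ, hψ⟩)⟩
  | subst σ _ ih =>
      obtain ⟨Γ', hΓ', hcard, h'⟩ := ih
      exact ⟨_, Set.image_mono hΓ', Cardinal.mk_image_le.trans hcard, subst σ h'⟩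

end RelabelClosure

end RelabelClosure

theorem stmt_12_general {L : FirstOrder.Language.{u, v}} {X Y : Type w}
    (em : X → Y) (hem : Function.Injective em)
    (κ : Cardinal.{max u w}) (hinf : Cardinal.aleph0 ≤ κ)
    (r : Set (L.Term X) → L.Term X → Prop) (hlogic : IsLogicOn r)
    (hκary : KAry κ r) :
    ∃ r' : Set (L.Term Y) → L.Term Y → Prop,
      IsLogicOn r' ∧
      -- cardinality of r' is at most κ⁺
      KAry (Order.succ κ) r' ∧
      -- r' is a conservative extension of r
      (∀ (Γ : Set (L.Term X)) (φ : L.Term X),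
          r Γ φ ↔ r' (Term.relabel em '' Γ) (Term.relabel em φ)) :=
  ⟨RelabelClosure em r, RelabelClosure.isLogicOn, RelabelClosure.kAry_succ hinf hκary,
    fun Γ φ => (RelabelClosure.relabel_iff hlogic hem Γ φ).symm⟩

/-- let κ be a singular cardinal, `X ⊆ Y` infinite and
`l = (Fm_Σ(X), ⊢)` a logic of cardinality κ. Then there is a logic `r'` on `Fm_Σ(Y)`
of cardinality at most `κ⁺` (i.e. `κ⁺`-ary) which is a conservative extension of `l`. -/
theorem stmt_12 {L : FirstOrder.Language.{u, v}} {X Y : Type w}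
    [Infinite X] [Infinite Y]
    (em : X → Y) (hem : Function.Injective em)
    (κ : Cardinal.{max u w}) (hinf : Cardinal.aleph0 ≤ κ) (hsing : ¬κ.IsRegular)
    (r : Set (L.Term X) → L.Term X → Prop) (hlogic : IsLogicOn r)
    (hκary : KAry κ r)
    (hleast : ∀ μ : Cardinal.{max u w}, Cardinal.aleph0 ≤ μ → KAry μ r → κ ≤ μ) :
    ∃ r' : Set (L.Term Y) → L.Term Y → Prop,
      IsLogicOn r' ∧
      -- cardinality of r' is at most κ⁺
      KAry (Order.succ κ) r' ∧
      -- r' is a conservative extension of r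
      (∀ (Γ : Set (L.Term X)) (φ : L.Term X),
          r Γ φ ↔ r' (Term.relabel em '' Γ) (Term.relabel em φ)) :=
  stmt_12_general em hem κ hinf r hlogic hκary
end

section
/- Let X ⊆ Y be infinite sets and l = (Fm_Σ(X), ⊢) a logic. Define the operator E on ℘(Fm_Σ(Y)) by E(Γ) := {φ : Γ ⊢^SS φ}, and the operator C on ℘(Fm_Σ(Y)) by letting C(Γ) be the smallest l-filter on Fm_Σ(Y) containing Γ. Then C is the idempotent hull of E, i.e., C is the least closure operator on ℘(Fm_Σ(Y)) that pointwise contains E. -/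
open FirstOrder FirstOrder.Language

/-- `F` is an `l`-filter on `Fm_Σ(Y)`: for all `Γ₀ ⊢ φ₀` in the logic `r` on
`Fm_Σ(X)` and every Σ-homomorphism `v : Fm_Σ(X) → Fm_Σ(Y)`, if `v[Γ₀] ⊆ F` then
`v(φ₀) ∈ F`. -/
def IsFilterY {L : FirstOrder.Language} {X Y : Type*}
    (r : Set (L.Term X) → L.Term X → Prop) (F : Set (L.Term Y)) : Prop :=
  ∀ (Γ₀ : Set (L.Term X)) (φ₀ : L.Term X), r Γ₀ φ₀ →
    ∀ v : X → L.Term Y, (fun t : L.Term X => t.subst v) '' Γ₀ ⊆ F → φ₀.subst v ∈ F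

/-- The smallest `l`-filter on `Fm_Σ(Y)` containing `Γ`. -/
def filterCl {L : FirstOrder.Language} {X Y : Type*}
    (r : Set (L.Term X) → L.Term X → Prop) (Γ : Set (L.Term Y)) : Set (L.Term Y) :=
  ⋂₀ {F : Set (L.Term Y) | IsFilterY r F ∧ Γ ⊆ F}

/-- with `E(Γ) = {φ : Γ ⊢^SS φ}` and `C(Γ)` the smallest `l`-filter on
`Fm_Σ(Y)` containing `Γ`, the operator `C` is the idempotent hull of `E`: the least
closure operator on `℘(Fm_Σ(Y))` pointwise containing `E`. -/
theorem stmt_14 {L : FirstOrder.Language} {X Y : Type*} [Infinite X] [Infinite Y]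
    (em : X → Y) (hem : Function.Injective em)
    (r : Set (L.Term X) → L.Term X → Prop) (hlogic : IsLogicOn r) :
    -- C is a closure operator
    (∀ Γ : Set (L.Term Y), Γ ⊆ filterCl r Γ) ∧
    (∀ Γ Δ : Set (L.Term Y), Γ ⊆ Δ → filterCl r Γ ⊆ filterCl r Δ) ∧
    (∀ Γ : Set (L.Term Y), filterCl r (filterCl r Γ) = filterCl r Γ) ∧
    -- C pointwise contains E
    (∀ Γ : Set (L.Term Y), {φ | ShoesmithSmiley r Γ φ} ⊆ filterCl r Γ) ∧
    -- C is the least closure operator pointwise containing E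
    (∀ C' : Set (L.Term Y) → Set (L.Term Y),
        (∀ S, S ⊆ C' S) → (∀ S T, S ⊆ T → C' S ⊆ C' T) →
        (∀ S, C' (C' S) = C' S) →
        (∀ S, {φ | ShoesmithSmiley r S φ} ⊆ C' S) →
        ∀ S, filterCl r S ⊆ C' S) := by
  have hext : ∀ Γ : Set (L.Term Y), Γ ⊆ filterCl r Γ := by
    intro Γ φ hφ F hF
    exact hF.2 hφ
  have hfil : ∀ Γ : Set (L.Term Y), IsFilterY r (filterCl r Γ) := by
    intro Γ Γ₀ φ₀ hr v hsub F hF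
    exact hF.1 Γ₀ φ₀ hr v (hsub.trans (Set.sInter_subset_of_mem hF))
  have hmono : ∀ Γ Δ : Set (L.Term Y), Γ ⊆ Δ → filterCl r Γ ⊆ filterCl r Δ := by
    intro Γ Δ h φ hφ F hF
    exact hφ F (Set.mem_setOf.2 ⟨hF.1, h.trans hF.2⟩)
  refine ⟨hext, hmono, ?_, ?_, ?_⟩
  · intro Γ
    apply Set.Subset.antisymm
    · exact Set.sInter_subset_of_mem ⟨hfil Γ, Set.Subset.rfl⟩
    · exact hext _
  · rintro Γ φ ⟨Γ₀, φ₀, v, hsub, hφ, hr⟩ F hF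
    exact hφ ▸ hF.1 Γ₀ φ₀ hr v (hsub.trans hF.2)
  · intro C' hext' hmono' hidem' hE S
    have : IsFilterY r (C' S) := by
      intro Γ₀ φ₀ hr v hsub
      have : ShoesmithSmiley r (C' S) (φ₀.subst v) := ⟨Γ₀, φ₀, v, hsub, rfl, hr⟩
      have := hE (C' S) this
      rwa [hidem' S] at this
    exact Set.sInter_subset_of_mem ⟨this, hext' S⟩
end

section
/- Let X ⊆ Y be infinite sets and l = (Fm_Σ(X), ⊢) a logic. Let ⊢^- be the smallest consequence relation on Fm_Σ(Y) (reflexive, monotone, structural, satisfying cut) such that Γ ⊢^- φ whenever Γ ∪ {φ} ⊆ Fm_Σ(X) and Γ ⊢ φ. Then for all Γ ∪ {φ} ⊆ Fm_Σ(Y): Γ ⊢^- φ if and only if φ belongs to every l-filter on Fm_Σ(Y) that contains Γ. Moreover ⊢^- contains the Shoesmith–Smiley relation ⊢^SS and is its idempotent closure. -/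
open FirstOrder FirstOrder.Language

/-- `⊢⁻`: the smallest consequence relation on `Fm_Σ(Y)` satisfying `Γ ⊢⁻ φ`
whenever `Γ ∪ {φ} ⊆ Fm_Σ(X)` and `Γ ⊢ φ`; defined as the intersection of all such
consequence relations. -/
def MinExt {L : FirstOrder.Language} {X Y : Type*} (em : X → Y)
    (r : Set (L.Term X) → L.Term X → Prop)
    (Γ : Set (L.Term Y)) (φ : L.Term Y) : Prop :=
  ∀ R : Set (L.Term Y) → L.Term Y → Prop,
    IsLogicOn R →
    (∀ (Γ₀ : Set (L.Term X)) (φ₀ : L.Term X), r Γ₀ φ₀ →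
        R (Term.relabel em '' Γ₀) (Term.relabel em φ₀)) →
    R Γ φ

private lemma subst_subst' {L : FirstOrder.Language} {X Y Z : Type*}
    (t : L.Term X) (v : X → L.Term Y) (σ : Y → L.Term Z) :
    (t.subst v).subst σ = t.subst (fun x => (v x).subst σ) := by
  induction t with
  | var => simp
  | func f ts ih => simp [ih]

private lemma relabel_eq_subst' {L : FirstOrder.Language} {X Y : Type*}
    (t : L.Term X) (em : X → Y) :
    t.relabel em = t.subst (fun x => Term.var (em x)) := by
  induction t with
  | var => simp
  | func f ts ih => simp [ih]

/-- Key lemma: any logic `R` containing the relabeled pairs also contains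
all substitution instances of `r`-pairs. -/
private lemma key {L : FirstOrder.Language} {X Y : Type*}
    (em : X → Y) (hem : Function.Injective em)
    {r : Set (L.Term X) → L.Term X → Prop}
    {R : Set (L.Term Y) → L.Term Y → Prop} (hR : IsLogicOn R)
    (hbase : ∀ (Γ₀ : Set (L.Term X)) (φ₀ : L.Term X), r Γ₀ φ₀ →
        R (Term.relabel em '' Γ₀) (Term.relabel em φ₀))
    {Γ₀ : Set (L.Term X)} {φ₀ : L.Term X} (h : r Γ₀ φ₀) (v : X → L.Term Y) :
    R ((fun t : L.Term X => t.subst v) '' Γ₀) (φ₀.subst v) := by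
  classical
  set σ : Y → L.Term Y := fun y => if h : ∃ x, em x = y then v h.choose else Term.var y
    with hσ
  have hσem : ∀ x, σ (em x) = v x := by
    intro x
    have hx : ∃ x', em x' = em x := ⟨x, rfl⟩
    simp only [hσ, dif_pos hx]
    congr 1
    exact hem hx.choose_spec
  have hcomp : ∀ t : L.Term X, (t.relabel em).subst σ = t.subst v := by
    intro t
    rw [relabel_eq_subst', subst_subst']
    simp only [Term.subst, hσem]
  have := hR.2.2.2 σ _ _ (hbase Γ₀ φ₀ h)
  rw [Set.image_image] at this
  simpa only [hcomp] using this

/-- The filter-semantical consequence relation is a logic satisfying the base. -/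
private lemma minExt_mp {L : FirstOrder.Language} {X Y : Type*}
    (em : X → Y) (r : Set (L.Term X) → L.Term X → Prop)
    {Γ : Set (L.Term Y)} {φ : L.Term Y} (h : MinExt em r Γ φ) :
    ∀ F : Set (L.Term Y), IsFilterY r F → Γ ⊆ F → φ ∈ F := by
  have hR : IsLogicOn (fun (Γ' : Set (L.Term Y)) (φ' : L.Term Y) =>
      ∀ F : Set (L.Term Y), IsFilterY r F → Γ' ⊆ F → φ' ∈ F) := by
    refine ⟨fun Γ φ hφ F _ hΓF => hΓF hφ,
      fun Γ Δ φ hΓΔ h F hF hΔF => h F hF (hΓΔ.trans hΔF),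
      fun Γ Δ φ h hΓ F hF hΔF => h F hF (fun ψ hψ => hΓ ψ hψ F hF hΔF),
      fun σ Γ φ h F hF hΓF => ?_⟩
    refine h {t | t.subst σ ∈ F} (fun Γ₀ φ₀ hr v hsub => ?_)
      (fun ψ hψ => hΓF ⟨ψ, hψ, rfl⟩)
    show (φ₀.subst v).subst σ ∈ F
    rw [subst_subst']
    refine hF Γ₀ φ₀ hr _ (fun t ht => ?_)
    obtain ⟨s, hs, rfl⟩ := ht
    show s.subst (fun x => (v x).subst σ) ∈ F
    rw [← subst_subst']
    exact hsub ⟨s, hs, rfl⟩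
  refine h _ hR (fun Γ₀ φ₀ hr F hF hΓF => ?_)
  rw [relabel_eq_subst']
  refine hF Γ₀ φ₀ hr _ (fun t ht => ?_)
  obtain ⟨s, hs, rfl⟩ := ht
  show s.subst (fun x => Term.var (em x)) ∈ F
  rw [← relabel_eq_subst']
  exact hΓF ⟨s, hs, rfl⟩

/-- The `MinExt`-closure of any set is an `l`-filter. -/
private lemma minExt_filter {L : FirstOrder.Language} {X Y : Type*}
    (em : X → Y) (hem : Function.Injective em)
    (r : Set (L.Term X) → L.Term X → Prop) (Γ : Set (L.Term Y)) :
    IsFilterY r {ψ | MinExt em r Γ ψ} := by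
  intro Γ₀ φ₀ hr v hsub R hR hbase
  have h1 := key em hem hR hbase hr v
  exact hR.2.2.1 _ _ _ h1 (fun ψ hψ => hsub hψ R hR hbase)
/-- `Γ ⊢⁻ φ` iff `φ` belongs to every `l`-filter on `Fm_Σ(Y)`
containing `Γ`; moreover `⊢⁻` contains `⊢^SS` and is its idempotent closure
(the least closure operator pointwise above the Shoesmith–Smiley operator). -/
theorem stmt_15 {L : FirstOrder.Language} {X Y : Type*} [Infinite X] [Infinite Y]
    (em : X → Y) (hem : Function.Injective em)
    (r : Set (L.Term X) → L.Term X → Prop) (hlogic : IsLogicOn r) :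
    -- ⊢⁻ is the filter-semantical consequence
    (∀ (Γ : Set (L.Term Y)) (φ : L.Term Y),
        MinExt em r Γ φ ↔ ∀ F : Set (L.Term Y), IsFilterY r F → Γ ⊆ F → φ ∈ F) ∧
    -- ⊢⁻ contains ⊢^SS
    (∀ (Γ : Set (L.Term Y)) (φ : L.Term Y),
        ShoesmithSmiley r Γ φ → MinExt em r Γ φ) ∧
    -- ⊢⁻ is the idempotent closure of ⊢^SS: its operator is a closure operator ...
    (∀ Γ : Set (L.Term Y),
        {φ | MinExt em r {ψ | MinExt em r Γ ψ} φ} = {φ | MinExt em r Γ φ}) ∧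
    (∀ Γ Δ : Set (L.Term Y), Γ ⊆ Δ →
        {φ | MinExt em r Γ φ} ⊆ {φ | MinExt em r Δ φ}) ∧
    (∀ Γ : Set (L.Term Y), Γ ⊆ {φ | MinExt em r Γ φ}) ∧
    -- ... and it is below every closure operator pointwise above ⊢^SS
    (∀ C' : Set (L.Term Y) → Set (L.Term Y),
        (∀ S, S ⊆ C' S) → (∀ S T, S ⊆ T → C' S ⊆ C' T) →
        (∀ S, C' (C' S) = C' S) →
        (∀ (S : Set (L.Term Y)) (φ : L.Term Y), ShoesmithSmiley r S φ → φ ∈ C' S) →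
        ∀ (S : Set (L.Term Y)) (φ : L.Term Y), MinExt em r S φ → φ ∈ C' S) := by
  classical
  have hiff : ∀ (Γ : Set (L.Term Y)) (φ : L.Term Y),
      MinExt em r Γ φ ↔ ∀ F : Set (L.Term Y), IsFilterY r F → Γ ⊆ F → φ ∈ F := by
    intro Γ φ
    constructor
    · exact minExt_mp em r
    · intro h
      exact h _ (minExt_filter em hem r Γ) (fun ψ hψ R hR hbase => hR.1 Γ ψ hψ)
  have hmono : ∀ Γ Δ : Set (L.Term Y), Γ ⊆ Δ →
      {φ | MinExt em r Γ φ} ⊆ {φ | MinExt em r Δ φ} :=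
    fun Γ Δ hΓΔ φ h R hR hbase => hR.2.1 Γ Δ φ hΓΔ (h R hR hbase)
  have hext : ∀ Γ : Set (L.Term Y), Γ ⊆ {φ | MinExt em r Γ φ} :=
    fun Γ φ hφ R hR _ => hR.1 Γ φ hφ
  refine ⟨hiff, ?_, ?_, hmono, hext, ?_⟩
  · rintro Γ φ ⟨Γ₀, φ₀, v, hsub, rfl, hr⟩ R hR hbase
    exact hR.2.1 _ _ _ hsub (key em hem hR hbase hr v)
  · intro Γ
    apply Set.Subset.antisymm
    · intro φ h R hR hbase
      exact hR.2.2.1 _ _ _ (h R hR hbase) (fun ψ hψ => hψ R hR hbase)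
    · exact hmono _ _ (hext Γ)
  · intro C' hC1 hC2 hC3 hCSS S φ h
    refine minExt_mp em r h (C' S) (fun Γ₀ φ₀ hr v hsub => ?_) (hC1 S)
    have : φ₀.subst v ∈ C' ((fun t : L.Term X => t.subst v) '' Γ₀) :=
      hCSS _ _ ⟨Γ₀, φ₀, v, Set.Subset.rfl, rfl, hr⟩
    have h2 := hC2 _ _ hsub this
    rwa [hC3] at h2
end

section
/- Let X ⊆ Y be infinite sets, l_X = (Fm_Σ(X), ⊢) a logic, and l_Y = (Fm_Σ(Y), ⊢') a natural extension of l_X (a logic on Fm_Σ(Y) that is a conservative extension of l_X and has the same cardinality). Suppose that either |X| = |Y| or card(l_X) ≤ |X|⁺ (the successor cardinal of |X|). Then for every Σ-algebra M and every subset F ⊆ M: F is an l_X-filter on M if and only if F is an l_Y-filter on M. -/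
universe u v w m

open FirstOrder FirstOrder.Language

/-- `F ⊆ M` is a filter on the Σ-structure `M` for the logic `r` on `Fm_Σ(W)`. -/
def IsFilter {L : FirstOrder.Language} {W : Type*}
    (r : Set (L.Term W) → L.Term W → Prop)
    {M : Type*} [L.Structure M] (F : Set M) : Prop :=
  ∀ (Γ : Set (L.Term W)) (φ : L.Term W), r Γ φ →
    ∀ v : W → M, (fun t : L.Term W => t.realize v) '' Γ ⊆ F → φ.realize v ∈ F

namespace Stmt16Aux

variable {L : FirstOrder.Language.{u, v}} {α β : Type*}

/-- Set of variables of a term. -/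
def termVars : L.Term α → Set α
  | .var x => {x}
  | .func _ ts => ⋃ i, termVars (ts i)

lemma termVars_countable (t : L.Term α) : (termVars t).Countable := by
  induction t with
  | var x => exact Set.countable_singleton x
  | func f ts ih => exact Set.countable_iUnion ih

lemma subst_var_eq_relabel (f : α → β) (t : L.Term α) :
    t.subst (fun x => Term.var (f x)) = t.relabel f := by
  induction t with
  | var => rfl
  | func g ts ih => simp [Term.subst, ih]

lemma realize_congr_vars {M : Type m} [L.Structure M] {t : L.Term α} {v w : α → M}
    (h : ∀ x ∈ termVars t, v x = w x) : t.realize v = t.realize w := by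
  induction t with
  | var x => exact h x (by simp [termVars])
  | func f ts ih =>
      simp only [Term.realize]
      congr 1
      funext i
      exact ih i fun x hx => h x (Set.mem_iUnion.2 ⟨i, hx⟩)

/-- Main transfer step: if `F` is an `rX`-filter, `rY Δ φ` with `Δ ⊆ Γ`, and we have a
renaming `g : Y → X` together with a valuation `w : X → M` compatible with `v` on all
variables occurring in `insert φ Δ`, then `φ.realize v ∈ F`. -/
lemma transfer {X Y : Type w} (em : X → Y)
    (rX : Set (L.Term X) → L.Term X → Prop)
    (rY : Set (L.Term Y) → L.Term Y → Prop)
    (hlY : IsLogicOn rY)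
    (hcons : ∀ (Γ : Set (L.Term X)) (φ : L.Term X),
        rX Γ φ ↔ rY (Term.relabel em '' Γ) (Term.relabel em φ))
    {M : Type m} [L.Structure M] {F : Set M} (hF : IsFilter rX F)
    {Γ Δ : Set (L.Term Y)} {φ : L.Term Y} (hΔΓ : Δ ⊆ Γ) (hd : rY Δ φ)
    (v : Y → M) (hv : (fun t : L.Term Y => t.realize v) '' Γ ⊆ F)
    (g : Y → X) (w : X → M)
    (hgw : ∀ t ∈ insert φ Δ, ∀ y ∈ termVars t, w (g y) = v y) :
    φ.realize v ∈ F := by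
  have hsub := hlY.2.2.2 (fun y => Term.var (em (g y))) Δ φ hd
  have he : (fun t : L.Term Y => t.subst (fun y => Term.var (em (g y))))
      = Term.relabel (em ∘ g) := funext fun t => subst_var_eq_relabel (em ∘ g) t
  rw [he, show φ.subst (fun y => Term.var (em (g y))) = φ.relabel (em ∘ g) from
    subst_var_eq_relabel (em ∘ g) φ] at hsub
  have himg : Term.relabel (em ∘ g) '' Δ = Term.relabel em '' (Term.relabel g '' Δ) := by
    rw [Set.image_image]
    exact Set.image_congr fun t _ => (Term.relabel_relabel g em t).symm
  rw [himg, ← Term.relabel_relabel g em φ] at hsub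
  have hX : rX (Term.relabel g '' Δ) (φ.relabel g) := (hcons _ _).mpr hsub
  have hreal : ∀ t ∈ insert φ Δ, (t.relabel g).realize w = t.realize v := by
    intro t ht
    rw [Term.realize_relabel]
    exact realize_congr_vars fun y hy => hgw t ht y hy
  have hmem := hF _ _ hX w ?_
  · rw [hreal φ (Set.mem_insert _ _)] at hmem
    exact hmem
  · rintro _ ⟨_, ⟨t, ht, rfl⟩, rfl⟩
    show (Term.relabel g t).realize w ∈ F
    rw [hreal t (Set.mem_insert_of_mem _ ht)]
    exact hv ⟨t, hΔΓ ht, rfl⟩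

end Stmt16Aux

open Stmt16Aux in
/-- let `l_Y` be a natural extension of `l_X` (a conservative extension
of the same cardinality), and suppose `|X| = |Y|` or `card(l_X) ≤ |X|⁺`. Then for
every Σ-algebra `M` and `F ⊆ M`: `F` is an `l_X`-filter iff it is an `l_Y`-filter. -/
theorem stmt_16 {L : FirstOrder.Language.{u, v}} {X Y : Type w}
    [Infinite X] [Infinite Y]
    (em : X → Y) (hem : Function.Injective em)
    (rX : Set (L.Term X) → L.Term X → Prop)
    (rY : Set (L.Term Y) → L.Term Y → Prop)
    (hlX : IsLogicOn rX) (hlY : IsLogicOn rY)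
    -- l_Y is a conservative extension of l_X
    (hcons : ∀ (Γ : Set (L.Term X)) (φ : L.Term X),
        rX Γ φ ↔ rY (Term.relabel em '' Γ) (Term.relabel em φ))
    -- l_Y has the same cardinality as l_X
    (hsame : ∀ μ : Cardinal.{max u w}, Cardinal.aleph0 ≤ μ → (KAry μ rX ↔ KAry μ rY))
    -- |X| = |Y| or card(l_X) ≤ |X|⁺
    (hcond : Cardinal.mk X = Cardinal.mk Y ∨
        KAry (Order.succ (Cardinal.lift.{u} (Cardinal.mk X))) rX) :
    ∀ (M : Type m) [L.Structure M] (F : Set M),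
      IsFilter rX F ↔ IsFilter rY F := by
  intro M _ F
  classical
  constructor
  · -- hard direction: an `rX`-filter is an `rY`-filter
    intro hF Γ φ hd v hv
    have hMne : Nonempty M := ⟨v (Classical.arbitrary Y)⟩
    have h0' : Cardinal.aleph0 ≤ Cardinal.lift.{u} (Cardinal.mk X) := by
      rw [← Cardinal.lift_aleph0.{u, w}, Cardinal.lift_le]
      exact Cardinal.infinite_iff.1 ‹Infinite X›
    rcases hcond with heq | hk
    · -- case |X| = |Y|
      obtain gE := (Classical.choice (Cardinal.eq.1 heq)).symm
      exact transfer em rX rY hlY hcons hF (subset_refl Γ) hd v hv gE (v ∘ gE.symm)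
        (fun t _ y _ => by simp)
    · -- case card(l_X) ≤ |X|⁺
      have hk' : KAry (Order.succ (Cardinal.lift.{u} (Cardinal.mk X))) rY :=
        (hsame _ (le_trans h0' (Order.le_succ _))).1 hk
      obtain ⟨Δ, hΔΓ, hcard, hdΔ⟩ := hk' Γ φ hd
      have hcard' : Cardinal.mk ↥Δ ≤ Cardinal.lift.{u} (Cardinal.mk X) :=
        Order.lt_succ_iff.1 hcard
      have hΔ' : Cardinal.mk ↥(insert φ Δ) ≤ Cardinal.lift.{u} (Cardinal.mk X) := by
        refine le_trans (Cardinal.mk_insert_le) (le_trans (add_le_add hcard'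
          (le_trans Cardinal.one_le_aleph0 h0')) ?_)
        rw [Cardinal.add_eq_self h0']
      -- cover variable sets by sequences
      have cover : ∀ t : L.Term Y, ∃ f : ℕ → Y, termVars t ⊆ Set.range f := by
        intro t
        rcases (termVars t).eq_empty_or_nonempty with h | h
        · exact ⟨fun _ => Classical.arbitrary Y, by simp [h]⟩
        · obtain ⟨f, hf⟩ := Set.Countable.exists_eq_range (termVars_countable t) h
          exact ⟨f, hf.le⟩
      choose f hf using cover
      set V : Set Y := ⋃ t ∈ insert φ Δ, termVars t with hV
      have hVemb : ∀ y : ↥V, ∃ p : ↥(insert φ Δ) × ℕ, f p.1 p.2 = (y : Y) := by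
        rintro ⟨y, hy⟩
        obtain ⟨t, htΔ, hyt⟩ := Set.mem_iUnion₂.1 hy
        obtain ⟨n, hn⟩ := hf t hyt
        exact ⟨⟨⟨t, htΔ⟩, n⟩, hn⟩
      choose p hp using hVemb
      have hinj : Function.Injective p := fun a b hab =>
        Subtype.ext (by rw [← hp a, ← hp b, hab])
      have hVle : Cardinal.mk ↥V ≤ Cardinal.mk X := by
        rw [← Cardinal.lift_le.{u}]
        have h1 : Cardinal.lift.{max u w} (Cardinal.mk ↥V)
            ≤ Cardinal.lift.{w} (Cardinal.mk (↥(insert φ Δ) × ℕ)) :=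
          Cardinal.lift_mk_le'.mpr ⟨⟨p, hinj⟩⟩
        rw [Cardinal.lift_umax.{w, u}, Cardinal.lift_id'.{w, u}] at h1
        refine le_trans h1 ?_
        rw [Cardinal.mk_prod, Cardinal.lift_id'.{0, max u w}, Cardinal.mk_nat, Cardinal.lift_aleph0]
        calc Cardinal.mk ↥(insert φ Δ) * Cardinal.aleph0
            ≤ Cardinal.lift.{u} (Cardinal.mk X) * Cardinal.aleph0 :=
              mul_le_mul' hΔ' le_rfl
          _ = Cardinal.lift.{u} (Cardinal.mk X) := Cardinal.mul_aleph0_eq h0'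
      obtain ⟨e⟩ := (Cardinal.le_def _ _).mp hVle
      set g : Y → X := fun y => if h : y ∈ V then e ⟨y, h⟩ else Classical.arbitrary X
        with hg
      set w : X → M := fun x =>
        if h : ∃ yv : ↥V, e yv = x then v (Classical.choose h : ↥V)
        else Classical.choice hMne with hw
      refine transfer em rX rY hlY hcons hF hΔΓ hdΔ v hv g w ?_
      intro t ht y hy
      have hyV : y ∈ V := Set.mem_biUnion ht hy
      have hgy : g y = e ⟨y, hyV⟩ := by simp only [hg]; exact dif_pos hyV
      rw [hgy]
      have hex : ∃ yv : ↥V, e yv = e ⟨y, hyV⟩ := ⟨⟨y, hyV⟩, rfl⟩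
      have hch : Classical.choose hex = ⟨y, hyV⟩ := e.injective (Classical.choose_spec hex)
      simp only [hw]
      rw [dif_pos hex, hch]
  · -- easy direction: an `rY`-filter is an `rX`-filter
    intro hF Γ φ hd v hv
    have hMne : Nonempty M := ⟨v (Classical.arbitrary X)⟩
    have hY := (hcons Γ φ).1 hd
    set vy : Y → M := fun y =>
      if h : ∃ x, em x = y then v (Classical.choose h) else Classical.choice hMne with hvy
    have hue : vy ∘ em = v := by
      funext x
      have hex : ∃ x', em x' = em x := ⟨x, rfl⟩
      simp only [hvy, Function.comp_apply]
      rw [dif_pos hex, hem (Classical.choose_spec hex)]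
    have hmem := hF _ _ hY vy ?_
    · rwa [Term.realize_relabel, hue] at hmem
    · rintro _ ⟨_, ⟨t, ht, rfl⟩, rfl⟩
      show (Term.relabel em t).realize vy ∈ F
      rw [Term.realize_relabel, hue]
      exact hv ⟨t, ht, rfl⟩
end

section
/- Let X ⊆ Y be infinite sets and l_X = (Fm_Σ(X), ⊢) a logic, and suppose that either |X| = |Y| or card(l_X) ≤ |X|⁺ (the successor cardinal of |X|). Then l_X has at most one natural extension to Fm_Σ(Y): if ⊢₁ and ⊢₂ are both logics on Fm_Σ(Y) that are conservative extensions of l_X of the same cardinality as l_X, then ⊢₁ = ⊢₂. -/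
universe u v w

open FirstOrder FirstOrder.Language

/-!
Suppose `Γ ⊢₁ φ`. Either `|X| = |Y|`, or `⊢₁` is `|X|⁺`-ary and some `Γ' ⊆ Γ` of
size at most `|X|` already derives `φ`; in both cases the variables occurring in the derivation
form a set `V` with `|V| ≤ |X|`. Rename `V` injectively into the copy of `X` inside `Y`: by
structurality the renamed derivation holds in `⊢₁`, lives in `Fm_Σ(X)`, hence holds in `⊢ₓ` and so
in `⊢₂`. Renaming back, which is again a substitution, recovers `Γ' ⊢₂ φ`, and monotonicity gives
`Γ ⊢₂ φ`.
-/

open Cardinal Function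

namespace FirstOrder.Language.Term

variable {L : Language.{u, v}} {α β : Type*}

theorem subst_var_comp (f : α → β) (t : L.Term α) : t.subst (var ∘ f) = t.relabel f := by
  induction t with
  | var a => rfl
  | func F ts ih => simp only [subst, relabel, ih]

theorem relabel_congr [DecidableEq α] {f g : α → β} {t : L.Term α}
    (h : ∀ a ∈ t.varFinset, f a = g a) : t.relabel f = t.relabel g := by
  induction t with
  | var a => simpa [varFinset] using h
  | func F ts ih =>
    simp only [relabel, func.injEq, heq_eq_eq, true_and]
    exact funext fun i => ih i fun a ha => h a (Finset.mem_biUnion.2 ⟨i, Finset.mem_univ i, ha⟩)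

theorem relabel_relabel_eq_self [DecidableEq α] {f : α → β} {g : β → α} {t : L.Term α}
    (h : ∀ a ∈ t.varFinset, g (f a) = a) : (t.relabel f).relabel g = t := by
  rw [relabel_relabel, relabel_congr (f := g ∘ f) (g := id) h, relabel_id]

theorem mk_biUnion_varFinset_le {α : Type w} [DecidableEq α] {S : Set (L.Term α)}
    {κ : Cardinal.{w}} (hκ : ℵ₀ ≤ κ) (hS : #S ≤ lift.{u} κ) :
    #(⋃ t ∈ S, (t.varFinset : Set α)) ≤ κ := by
  rw [← lift_le.{max u w}]
  calc lift.{max u w} #(⋃ t ∈ S, (t.varFinset : Set α))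
      ≤ lift.{w} #S * ⨆ t : S, lift.{max u w} #(t.1.varFinset : Set α) :=
        mk_biUnion_le_lift _ _
    _ ≤ lift.{max u w} κ * ℵ₀ := by
        refine mul_le_mul' (by simpa using lift_le.{w}.2 hS) (ciSup_le' fun t => ?_)
        simp
    _ = lift.{max u w} κ := mul_aleph0_eq (aleph0_le_lift.2 hκ)

end FirstOrder.Language.Term

namespace IsLogicOn

variable {L : FirstOrder.Language.{u, v}}

theorem mono {W : Type*} {r : Set (L.Term W) → L.Term W → Prop} (hr : IsLogicOn r)
    {Γ Δ : Set (L.Term W)} {φ : L.Term W} (hΓΔ : Γ ⊆ Δ) (h : r Γ φ) : r Δ φ :=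
  hr.2.1 Γ Δ φ hΓΔ h

theorem relabel {W : Type*} {r : Set (L.Term W) → L.Term W → Prop} (hr : IsLogicOn r)
    (f : W → W) {Γ : Set (L.Term W)} {φ : L.Term W} (h : r Γ φ) :
    r (Term.relabel f '' Γ) (φ.relabel f) := by
  simpa only [Term.subst_var_comp] using hr.2.2.2 (Term.var ∘ f) Γ φ h

variable {X Y : Type w} {em : X → Y} {r₁ r₂ : Set (L.Term Y) → L.Term Y → Prop}

theorem imp_of_varFinset_subset [DecidableEq Y] [Nonempty X] (hem : Injective em)
    (hl₁ : IsLogicOn r₁) (hl₂ : IsLogicOn r₂)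
    (hagree : ∀ (Δ : Set (L.Term X)) (ψ : L.Term X),
      r₁ (Term.relabel em '' Δ) (ψ.relabel em) → r₂ (Term.relabel em '' Δ) (ψ.relabel em))
    {Γ : Set (L.Term Y)} {φ : L.Term Y} {V : Set Y} (hφ : ↑φ.varFinset ⊆ V)
    (hΓ : ∀ t ∈ Γ, ↑t.varFinset ⊆ V) (hV : #V ≤ #X) (h : r₁ Γ φ) : r₂ Γ φ := by
  classical
  obtain ⟨j⟩ := hV
  have : Nonempty Y := ⟨em (Classical.arbitrary X)⟩
  set g : Y → X := fun y => if hy : y ∈ V then j ⟨y, hy⟩ else Classical.arbitrary X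
  have hinj : Set.InjOn (em ∘ g) V := fun y hy z hz hyz => by
    have hjyz := hem hyz
    simp only [g, dif_pos hy, dif_pos hz] at hjyz
    exact congrArg Subtype.val (j.injective hjyz)
  set k := invFunOn (em ∘ g) V
  have hback : ∀ t : L.Term Y, ↑t.varFinset ⊆ V → ((t.relabel g).relabel em).relabel k = t :=
    fun t ht => by
      rw [Term.relabel_relabel]
      exact Term.relabel_relabel_eq_self fun a ha => hinj.leftInvOn_invFunOn (ht ha)
  have hX : r₂ (Term.relabel em '' (Term.relabel g '' Γ)) ((φ.relabel g).relabel em) := by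
    refine hagree _ _ ?_
    simpa only [Set.image_image, Term.relabel_relabel] using hl₁.relabel (em ∘ g) h
  have hΓback : Term.relabel k '' (Term.relabel em '' (Term.relabel g '' Γ)) = Γ := by
    rw [Set.image_image, Set.image_image]
    exact (Set.image_congr fun t ht => hback t (hΓ t ht)).trans (Set.image_id' Γ)
  simpa only [hΓback, hback φ hφ] using hl₂.relabel k hX

theorem imp_of_agree [Infinite X] (hem : Injective em) (hl₁ : IsLogicOn r₁)
    (hl₂ : IsLogicOn r₂)
    (hagree : ∀ (Δ : Set (L.Term X)) (ψ : L.Term X),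
      r₁ (Term.relabel em '' Δ) (ψ.relabel em) → r₂ (Term.relabel em '' Δ) (ψ.relabel em))
    (hcond : #X = #Y ∨ KAry (Order.succ (lift.{u} #X)) r₁)
    {Γ : Set (L.Term Y)} {φ : L.Term Y} (h : r₁ Γ φ) : r₂ Γ φ := by
  classical
  rcases hcond with hXY | hK
  · exact imp_of_varFinset_subset hem hl₁ hl₂ hagree (Set.subset_univ _)
      (fun _ _ => Set.subset_univ _) (by rw [mk_univ, hXY]) h
  · obtain ⟨Γ', hΓ'Γ, hΓ'card, hΓ'⟩ := hK Γ φ h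
    have hX : ℵ₀ ≤ #X := aleph0_le_mk X
    have hcard : #(insert φ Γ' : Set (L.Term Y)) ≤ lift.{u} #X :=
      mk_insert_le.trans <| (add_le_add_left (Order.lt_succ_iff.1 hΓ'card) 1).trans_eq
        (add_one_eq (aleph0_le_lift.2 hX))
    have hvars {t : L.Term Y} (ht : t ∈ insert φ Γ') :
        ↑t.varFinset ⊆ ⋃ s ∈ insert φ Γ', (s.varFinset : Set Y) :=
      Set.subset_biUnion_of_mem (u := fun s => (s.varFinset : Set Y)) ht
    exact hl₂.mono hΓ'Γ <| imp_of_varFinset_subset hem hl₁ hl₂ hagree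
      (hvars (Set.mem_insert φ Γ')) (fun t ht => hvars (Set.mem_insert_of_mem φ ht))
      (Term.mk_biUnion_varFinset_le hX hcard) hΓ'

end IsLogicOn

theorem stmt_17_general {L : FirstOrder.Language.{u, v}} {X Y : Type w}
    [Infinite X]
    (em : X → Y) (hem : Function.Injective em)
    (rX : Set (L.Term X) → L.Term X → Prop)
    (hcond : Cardinal.mk X = Cardinal.mk Y ∨
        KAry (Order.succ (Cardinal.lift.{u} (Cardinal.mk X))) rX)
    (r₁ r₂ : Set (L.Term Y) → L.Term Y → Prop)
    (hl₁ : IsLogicOn r₁) (hl₂ : IsLogicOn r₂)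
    -- both are conservative extensions of l_X
    (hcons₁ : ∀ (Γ : Set (L.Term X)) (φ : L.Term X),
        rX Γ φ ↔ r₁ (Term.relabel em '' Γ) (Term.relabel em φ))
    (hcons₂ : ∀ (Γ : Set (L.Term X)) (φ : L.Term X),
        rX Γ φ ↔ r₂ (Term.relabel em '' Γ) (Term.relabel em φ))
    -- both have the same cardinality as l_X
    (hsame₁ : ∀ μ : Cardinal.{max u w}, Cardinal.aleph0 ≤ μ → (KAry μ rX ↔ KAry μ r₁))
    (hsame₂ : ∀ μ : Cardinal.{max u w}, Cardinal.aleph0 ≤ μ → (KAry μ rX ↔ KAry μ r₂)) :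
    r₁ = r₂ := by
  have hμ : ℵ₀ ≤ Order.succ (lift.{u} #X) :=
    (aleph0_le_lift.2 (aleph0_le_mk X)).trans (Order.le_succ _)
  funext Γ φ
  refine propext ⟨IsLogicOn.imp_of_agree hem hl₁ hl₂ ?_ (hcond.imp_right (hsame₁ _ hμ).1),
    IsLogicOn.imp_of_agree hem hl₂ hl₁ ?_ (hcond.imp_right (hsame₂ _ hμ).1)⟩
  · exact fun Δ ψ h => (hcons₂ Δ ψ).1 ((hcons₁ Δ ψ).2 h)
  · exact fun Δ ψ h => (hcons₁ Δ ψ).1 ((hcons₂ Δ ψ).2 h)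

/-- Cintula–Noguera: if `|X| = |Y|` or `card(l_X) ≤ |X|⁺`, then `l_X`
has at most one natural extension to `Fm_Σ(Y)`: any two logics on `Fm_Σ(Y)` that are
conservative extensions of `l_X` of the same cardinality as `l_X` are equal. -/
theorem stmt_17 {L : FirstOrder.Language.{u, v}} {X Y : Type w}
    [Infinite X] [Infinite Y]
    (em : X → Y) (hem : Function.Injective em)
    (rX : Set (L.Term X) → L.Term X → Prop) (hlX : IsLogicOn rX)
    (hcond : Cardinal.mk X = Cardinal.mk Y ∨
        KAry (Order.succ (Cardinal.lift.{u} (Cardinal.mk X))) rX)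
    (r₁ r₂ : Set (L.Term Y) → L.Term Y → Prop)
    (hl₁ : IsLogicOn r₁) (hl₂ : IsLogicOn r₂)
    -- both are conservative extensions of l_X
    (hcons₁ : ∀ (Γ : Set (L.Term X)) (φ : L.Term X),
        rX Γ φ ↔ r₁ (Term.relabel em '' Γ) (Term.relabel em φ))
    (hcons₂ : ∀ (Γ : Set (L.Term X)) (φ : L.Term X),
        rX Γ φ ↔ r₂ (Term.relabel em '' Γ) (Term.relabel em φ))
    -- both have the same cardinality as l_X
    (hsame₁ : ∀ μ : Cardinal.{max u w}, Cardinal.aleph0 ≤ μ → (KAry μ rX ↔ KAry μ r₁))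
    (hsame₂ : ∀ μ : Cardinal.{max u w}, Cardinal.aleph0 ≤ μ → (KAry μ rX ↔ KAry μ r₂)) :
    r₁ = r₂ :=
  stmt_17_general em hem rX hcond r₁ r₂ hl₁ hl₂ hcons₁ hcons₂ hsame₁ hsame₂
end
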